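/- arXiv:1805.08979 — 5 statements merged into one kernel-verified Lean document; each statement's English description precedes it below -/
import Mathlib

section
/- In the mining game with two miners of powers 2 and 1 and two coins each with reward 1, there is no exact potential function. Specifically, if H were an exact potential, summing the payoff differences along the 4-cycle of configurations (c1,c1)→(c1,c2)→(c2,c2)→(c2,c1)→(c1,c1) yields 2/3 ≠ 0, a contradiction. -/
open Finset Function

/-- Total mining power invested in coin `c` in configuration `s`. -/
noncomputable def totalPower {ι C : Type*} [Fintype ι] [DecidableEq C]
    (m : ι → ℝ) (s : ι → C) (c : C) : ℝ :=
  ∑ p, if s p = c then m p else 0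

/-- Revenue per unit of coin `c` in configuration `s`. -/
noncomputable def RPU {ι C : Type*} [Fintype ι] [DecidableEq C]
    (m : ι → ℝ) (F : C → ℝ) (s : ι → C) (c : C) : ℝ :=
  F c / totalPower m s c

/-- Payoff of miner `p` in configuration `s`. -/
noncomputable def payoff {ι C : Type*} [Fintype ι] [DecidableEq C]
    (m : ι → ℝ) (F : C → ℝ) (s : ι → C) (p : ι) : ℝ :=
  m p * F (s p) / totalPower m s (s p)

/-- A better response step of miner `p` moving to coin `c`. -/
def betterStep {ι C : Type*} [Fintype ι] [DecidableEq ι] [DecidableEq C]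
    (m : ι → ℝ) (F : C → ℝ) (s : ι → C) (p : ι) (c : C) : Prop :=
  payoff m F s p < payoff m F (Function.update s p c) p

/-- Miner `p` is stable in `s`: it has no better response step. -/
def minerStable {ι C : Type*} [Fintype ι] [DecidableEq ι] [DecidableEq C]
    (m : ι → ℝ) (F : C → ℝ) (s : ι → C) (p : ι) : Prop :=
  ∀ c, ¬ betterStep m F s p c

/-- A configuration is stable (a pure equilibrium) if no miner has a better response step. -/
def stableConfig {ι C : Type*} [Fintype ι] [DecidableEq ι] [DecidableEq C]
    (m : ι → ℝ) (F : C → ℝ) (s : ι → C) : Prop :=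
  ∀ p c, ¬ betterStep m F s p c

def IsExactPotential {ι C : Type*} [DecidableEq ι] (u : (ι → C) → ι → ℝ)
    (H : (ι → C) → ℝ) : Prop :=
  ∀ s p c, H (update s p c) - H s = u (update s p c) p - u s p

/- The fourth move, `q` back to `s q`, returns to `s`, so the payoff differences telescope
through `H` to zero. -/
theorem IsExactPotential.cycle_sum_eq_zero {ι C : Type*} [DecidableEq ι]
    {u : (ι → C) → ι → ℝ} {H : (ι → C) → ℝ} (hH : IsExactPotential u H)
    (s : ι → C) (p q : ι) (a b : C) :
    let s₁ := update s p a
    let s₂ := update s₁ q b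
    let s₃ := update s₂ p (s p)
    (u s₁ p - u s p) + (u s₂ q - u s₁ q) + (u s₃ p - u s₂ p) + (u s q - u s₃ q) = 0 := by
  intro s₁ s₂ s₃
  have hclosed : update s₃ q (s q) = s := by
    funext i
    by_cases hiq : i = q
    · subst hiq; simp
    · by_cases hip : i = p
      · subst hip; simp [s₃, hiq]
      · simp [s₃, s₂, s₁, hiq, hip]
  have h₄ := hH s₃ q (s q)
  rw [hclosed] at h₄
  rw [← hH s p a, ← hH s₁ q b, ← hH s₂ p (s p), ← h₄]
  ring

theorem payoff_const {ι C : Type*} [Fintype ι] [DecidableEq C]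
    (m : ι → ℝ) (F : C → ℝ) (c : C) (p : ι) :
    payoff m F (fun _ => c) p = m p * F c / ∑ q, m q := by
  simp [payoff, totalPower]

theorem totalPower_of_injective {ι C : Type*} [Fintype ι] [DecidableEq C]
    (m : ι → ℝ) {s : ι → C} (hs : Injective s) (p : ι) :
    totalPower m s (s p) = m p := by
  rw [totalPower, Finset.sum_eq_single p (fun q _ hqp => if_neg (hs.ne hqp)) (by simp)]
  simp

theorem payoff_of_injective {ι C : Type*} [Fintype ι] [DecidableEq C]
    {m : ι → ℝ} (F : C → ℝ) {s : ι → C} (hs : Injective s) {p : ι} (hm : m p ≠ 0) :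
    payoff m F s p = F (s p) := by
  rw [payoff, totalPower_of_injective m hs, mul_div_cancel_left₀ _ hm]

/-- the game with two miners of powers 2 and 1 and two coins with
reward 1 each admits no exact potential function. -/
theorem no_exact_potential :
    ¬ ∃ H : (Fin 2 → Fin 2) → ℝ,
      ∀ (s : Fin 2 → Fin 2) (p : Fin 2) (c : Fin 2),
        H (Function.update s p c) - H s =
          payoff (![2, 1] : Fin 2 → ℝ) (fun _ => (1 : ℝ)) (Function.update s p c) p -
            payoff (![2, 1] : Fin 2 → ℝ) (fun _ => (1 : ℝ)) s p := by
  rintro ⟨H, hH⟩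
  have hcycle := IsExactPotential.cycle_sum_eq_zero (u := payoff ![2, 1] fun _ => 1) hH
    (fun _ => 0) 1 0 1 1
  have hsplit₁ : Injective (update (fun _ : Fin 2 => (0 : Fin 2)) 1 1) := by decide
  have hmerge : update (update (fun _ : Fin 2 => (0 : Fin 2)) 1 1) 0 1 = fun _ => 1 := by
    decide
  have hsplit₂ : Injective (update (fun _ : Fin 2 => (1 : Fin 2)) 1 0) := by decide
  have hpow : ∀ p, (![2, 1] : Fin 2 → ℝ) p ≠ 0 := by
    intro p; fin_cases p <;> norm_num
  -- The miner of power 1 gains 2/3 at each of its moves, the one of power 2 loses 1/3,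
  -- so the cycle sum is 2/3.
  simp only [hmerge, payoff_of_injective _ hsplit₁ (hpow _),
    payoff_of_injective _ hsplit₂ (hpow _),
    payoff_const, Fin.sum_univ_two] at hcycle
  norm_num at hcycle
end

section
/- Every better response learning sequence in a mining game is finite, i.e., there is no infinite sequence of configurations where each is obtained from the previous by a better response step of some miner; hence every maximal sequence of better response steps ends in a pure Nash equilibrium. -/
open Finset Function

/-!
A miner's payoff is its power divided by the load `M_c / F_c` of its coin. A better response
step from coin `a` to coin `c` therefore lowers the load of `a`, and leaves the new load of `c`
below the old load of `a`: the multiset of coin loads decreases in the Dershowitz–Manna order.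
Loads take only finitely many values, so that order is well-founded. Hence there is no infinite
better response sequence, and a minimal configuration reachable from a given one is stable.
-/

theorem Multiset.isDershowitzMannaLT_map_univ {C α : Type*} [Fintype C] [DecidableEq C]
    [Preorder α] {f g : C → α} {a c : C} (hac : a ≠ c)
    (hfg : ∀ d, d ≠ a → d ≠ c → g d = f d) (ha : g a < f a) (hc : g c < f a) :
    Multiset.IsDershowitzMannaLT (univ.val.map g) (univ.val.map f) := by
  have hsplit : ∀ h : C → α,
      univ.val.map h = ((univ.erase a).erase c).val.map h + {h a, h c} := by
    intro h
    have hc : c ∈ univ.val.erase a := (Multiset.mem_erase_of_ne hac.symm).2 (mem_univ c)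
    conv_lhs => rw [← Multiset.cons_erase (mem_univ a), ← Multiset.cons_erase hc]
    simp only [Multiset.map_cons, Multiset.insert_eq_cons, Finset.erase_val]
    rw [add_comm, Multiset.cons_add, Multiset.singleton_add]
  refine ⟨((univ.erase a).erase c).val.map f, {g a, g c}, {f a, f c}, by simp, ?_, hsplit f, ?_⟩
  · rw [hsplit g]
    congr 1
    exact Multiset.map_congr rfl fun d hd => by
      simp only [Finset.mem_val, Finset.mem_erase] at hd
      exact hfg d hd.2.1 hd.1
  · simp only [Multiset.insert_eq_cons, Multiset.mem_cons, Multiset.mem_singleton]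
    rintro y (rfl | rfl)
    · exact ⟨f a, .inl rfl, ha⟩
    · exact ⟨f a, .inl rfl, hc⟩

section MiningGame

variable {ι C : Type*} [Fintype ι] [DecidableEq C]
  {m : ι → ℝ} {F : C → ℝ} {s : ι → C} {p : ι} {c : C}

theorem le_totalPower_self (hm : ∀ p, 0 ≤ m p) (s : ι → C) (p : ι) :
    m p ≤ totalPower m s (s p) := by
  simpa [totalPower] using single_le_sum (f := fun q => if s q = s p then m q else 0)
    (fun q _ => by split_ifs <;> simp [hm q]) (mem_univ p)

/-- The reciprocal of `RPU`; unlike `RPU` it has no junk value at a coin nobody mines. -/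
noncomputable def load (m : ι → ℝ) (F : C → ℝ) (s : ι → C) (c : C) : ℝ :=
  totalPower m s c / F c

theorem payoff_eq_div_load (m : ι → ℝ) (F : C → ℝ) (s : ι → C) (p : ι) :
    payoff m F s p = m p / load m F s (s p) := by
  rw [payoff, load, div_div_eq_mul_div]

theorem load_self_pos (hm : ∀ p, 0 < m p) (hF : ∀ c, 0 < F c) (s : ι → C) (p : ι) :
    0 < load m F s (s p) :=
  div_pos ((hm p).trans_le (le_totalPower_self (fun q => (hm q).le) s p)) (hF _)

variable [DecidableEq ι]

theorem totalPower_update (m : ι → ℝ) (s : ι → C) (p : ι) (c d : C) :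
    totalPower m (update s p c) d
      = totalPower m s d + (if c = d then m p else 0) - (if s p = d then m p else 0) := by
  have hterm : (fun q => if update s p c q = d then m q else 0)
      = update (fun q => if s q = d then m q else 0) p (if c = d then m p else 0) := by
    funext q
    by_cases hq : q = p
    · subst hq; simp
    · simp [update_of_ne hq]
  rw [totalPower, hterm, sum_update_of_mem (mem_univ p), ← erase_eq,
    sum_erase_eq_sub (mem_univ p), totalPower]
  ring

theorem ne_of_betterStep (h : betterStep m F s p c) : s p ≠ c := by
  rintro rfl
  exact h.ne (by rw [update_eq_self])

theorem load_update_lt_of_betterStep (hm : ∀ p, 0 < m p) (hF : ∀ c, 0 < F c)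
    (h : betterStep m F s p c) : load m F (update s p c) c < load m F s (s p) := by
  have hpos := load_self_pos hm hF (update s p c) p
  rw [update_self] at hpos
  rw [betterStep, payoff_eq_div_load, payoff_eq_div_load, update_self] at h
  exact (div_lt_div_iff_of_pos_left (hm p) (load_self_pos hm hF s p) hpos).1 h

theorem load_update_self_lt (hm : 0 < m p) (hF : 0 < F (s p)) (hpc : s p ≠ c) :
    load m F (update s p c) (s p) < load m F s (s p) := by
  rw [load, load, totalPower_update, if_neg hpc.symm, if_pos rfl]
  gcongr
  linarith

theorem load_update_of_ne {d : C} (hdp : d ≠ s p) (hdc : d ≠ c) :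
    load m F (update s p c) d = load m F s d := by
  rw [load, load, totalPower_update, if_neg hdc.symm, if_neg hdp.symm]
  ring

variable [Fintype C]

variable (m F) in
/-- Loads are taken in the finite set of all loads that occur, on which `<` is well-founded. -/
noncomputable def loadProfile (s : ι → C) :
    Multiset (Set.range fun q : (ι → C) × C => load m F q.1 q.2) :=
  univ.val.map fun c => ⟨load m F s c, (s, c), rfl⟩

theorem loadProfile_lt_of_betterStep (hm : ∀ p, 0 < m p) (hF : ∀ c, 0 < F c)
    (h : betterStep m F s p c) :
    Multiset.IsDershowitzMannaLT (loadProfile m F (update s p c)) (loadProfile m F s) :=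
  Multiset.isDershowitzMannaLT_map_univ (ne_of_betterStep h)
    (fun _ hdp hdc => Subtype.ext (load_update_of_ne hdp hdc))
    (load_update_self_lt (hm p) (hF _) (ne_of_betterStep h))
    (load_update_lt_of_betterStep hm hF h)

variable (m F) in
def BetterResponse (t t' : ι → C) : Prop :=
  ∃ p c, betterStep m F t p c ∧ t' = update t p c

theorem wellFounded_flip_betterResponse (hm : ∀ p, 0 < m p) (hF : ∀ c, 0 < F c) :
    WellFounded (flip (BetterResponse m F)) :=
  Subrelation.wf (fun ⟨_, _, h, ht'⟩ => ht' ▸ loadProfile_lt_of_betterStep hm hF h)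
    (InvImage.wf (loadProfile m F) Multiset.wellFounded_isDershowitzMannaLT)

end MiningGame

/-- every better response learning sequence is finite (no infinite chain
of better response steps), and every configuration has a better-response path to a
pure Nash equilibrium. -/
theorem better_response_converges {ι C : Type*} [Fintype ι] [DecidableEq ι]
    [Fintype C] [DecidableEq C]
    (m : ι → ℝ) (F : C → ℝ) (hm : ∀ p, 0 < m p) (hF : ∀ c, 0 < F c) :
    (∀ f : ℕ → ι → C,
        ¬ ∀ k, ∃ p c, betterStep m F (f k) p c ∧ f (k + 1) = Function.update (f k) p c) ∧
    (∀ s : ι → C, ∃ s' : ι → C,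
        Relation.ReflTransGen
          (fun t t' => ∃ p c, betterStep m F t p c ∧ t' = Function.update t p c) s s' ∧
        stableConfig m F s') := by
  have hwf := wellFounded_flip_betterResponse hm hF
  refine ⟨fun f hf => (wellFounded_iff_isEmpty_descending_chain.1 hwf).elim ⟨f, hf⟩, fun s => ?_⟩
  obtain ⟨s', hss', hmin⟩ := hwf.has_min {t | Relation.ReflTransGen (BetterResponse m F) s t}
    ⟨s, .refl⟩
  exact ⟨s', hss', fun p c h => hmin _ (hss'.tail ⟨p, c, h, rfl⟩) ⟨p, c, h, rfl⟩⟩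
end

section
/- In a generic mining game satisfying the never-alone assumption, if there exist at least two distinct stable configurations, then for every stable configuration s there exist a miner p and a stable configuration s' with u_p(s') > u_p(s). -/
/-!
In a stable configuration every coin is mined (never-alone), so the payoffs add up to
`∑ c, F c` whatever the configuration. If no miner strictly preferred another stable
configuration `s'` to `s`, the payoffs would agree miner by miner. A miner's payoff is its
power times the revenue per unit of its coin, and genericity says that this revenue
determines the coin, so `s' = s`.
-/

open Finset Function

section MiningGame

variable {ι C : Type*} (m : ι → ℝ) (F : C → ℝ)

def IsGeneric : Prop :=
  ∀ c c' : C, c ≠ c' → ∀ A B : Finset ι, A.Nonempty → B.Nonempty →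
    F c / ∑ p ∈ A, m p ≠ F c' / ∑ p ∈ B, m p

def NeverAlone [Fintype ι] [DecidableEq ι] [DecidableEq C] : Prop :=
  ∀ (s : ι → C) (c : C),
    (univ.filter fun p => s p = c).card ≤ 1 → ∃ p, betterStep m F s p c

variable [Fintype ι] [DecidableEq C]

lemma totalPower_eq_sum_filter (s : ι → C) (c : C) :
    totalPower m s c = ∑ p ∈ univ.filter fun p => s p = c, m p := by
  rw [totalPower, sum_filter]

lemma payoff_eq_mul_RPU (s : ι → C) (p : ι) :
    payoff m F s p = m p * RPU m F s (s p) := by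
  rw [payoff, RPU, mul_div_assoc]

variable {m F}

lemma IsGeneric.eq_of_RPU_eq (hgen : IsGeneric m F)
    {s s' : ι → C} {c c' : C} (hc : ∃ p, s p = c) (hc' : ∃ p, s' p = c')
    (h : RPU m F s c = RPU m F s' c') : c = c' := by
  by_contra hne
  obtain ⟨p, rfl⟩ := hc
  obtain ⟨p', rfl⟩ := hc'
  rw [RPU, RPU, totalPower_eq_sum_filter, totalPower_eq_sum_filter] at h
  exact hgen _ _ hne _ _ ⟨p, by simp⟩ ⟨p', by simp⟩ h

lemma IsGeneric.eq_of_payoff_eq (hm : ∀ p, 0 < m p) (hgen : IsGeneric m F)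
    {s s' : ι → C} (h : ∀ p, payoff m F s p = payoff m F s' p) : s = s' := by
  funext p
  refine hgen.eq_of_RPU_eq ⟨p, rfl⟩ ⟨p, rfl⟩ ?_
  have hp := h p
  rw [payoff_eq_mul_RPU, payoff_eq_mul_RPU] at hp
  exact mul_left_cancel₀ (hm p).ne' hp

variable [DecidableEq ι]

lemma fiber_nonempty_of_stableConfig (hAlone : NeverAlone m F) {s : ι → C}
    (hs : stableConfig m F s) (c : C) : (univ.filter fun p => s p = c).Nonempty := by
  rw [← card_pos, Nat.pos_iff_ne_zero]
  intro hempty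
  obtain ⟨p, hp⟩ := hAlone s c (by omega)
  exact hs p c hp

lemma sum_payoff_of_stableConfig [Fintype C] (hm : ∀ p, 0 < m p) (hAlone : NeverAlone m F)
    {s : ι → C} (hs : stableConfig m F s) : ∑ p, payoff m F s p = ∑ c, F c := by
  rw [← sum_fiberwise univ s (payoff m F s)]
  refine sum_congr rfl fun c _ => ?_
  have hpos : 0 < totalPower m s c := by
    rw [totalPower_eq_sum_filter]
    exact sum_pos (fun p _ => hm p) (fiber_nonempty_of_stableConfig hAlone hs c)
  calc ∑ p ∈ univ.filter fun p => s p = c, payoff m F s p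
      = (∑ p ∈ univ.filter fun p => s p = c, m p) * RPU m F s c := by
        rw [sum_mul]
        refine sum_congr rfl fun p hp => ?_
        rw [payoff_eq_mul_RPU, (mem_filter.mp hp).2]
    _ = F c := by
        rw [← totalPower_eq_sum_filter, RPU]
        field_simp

lemma payoff_eq_of_le_of_stableConfig [Fintype C] (hm : ∀ p, 0 < m p)
    (hAlone : NeverAlone m F) {s s' : ι → C} (hs : stableConfig m F s)
    (hs' : stableConfig m F s')
    (hle : ∀ p, payoff m F s' p ≤ payoff m F s p) (p : ι) :
    payoff m F s' p = payoff m F s p :=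
  (sum_eq_sum_iff_of_le fun q _ => hle q).mp
    ((sum_payoff_of_stableConfig hm hAlone hs').trans
      (sum_payoff_of_stableConfig hm hAlone hs).symm) p (mem_univ p)

end MiningGame

theorem exists_better_equilibrium_general {ι C : Type*} [Fintype ι] [DecidableEq ι]
    [Fintype C] [DecidableEq C]
    (m : ι → ℝ) (F : C → ℝ) (hm : ∀ p, 0 < m p)
    (hGeneric : ∀ c c' : C, c ≠ c' → ∀ A B : Finset ι, A.Nonempty → B.Nonempty →
      F c / ∑ p ∈ A, m p ≠ F c' / ∑ p ∈ B, m p)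
    (hAlone : ∀ (s : ι → C) (c : C),
      (Finset.univ.filter fun p => s p = c).card ≤ 1 → ∃ p, betterStep m F s p c)
    (hTwo : ∃ s₁ s₂ : ι → C, stableConfig m F s₁ ∧ stableConfig m F s₂ ∧ s₁ ≠ s₂)
    (s : ι → C) (hs : stableConfig m F s) :
    ∃ (p : ι) (s' : ι → C), stableConfig m F s' ∧ payoff m F s p < payoff m F s' p := by
  obtain ⟨s', hs', hs's⟩ : ∃ s', stableConfig m F s' ∧ s' ≠ s := by
    obtain ⟨s₁, s₂, h₁, h₂, h₁₂⟩ := hTwo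
    by_cases h : s₁ = s
    · exact ⟨s₂, h₂, fun e => h₁₂ (h.trans e.symm)⟩
    · exact ⟨s₁, h₁, h⟩
  by_contra! hworse
  exact hs's <| IsGeneric.eq_of_payoff_eq hm hGeneric
    (payoff_eq_of_le_of_stableConfig hm hAlone hs hs' fun p => hworse p s' hs')

/-- in a generic game satisfying the never-alone assumption, if there are
two distinct stable configurations, then every stable configuration is strictly worse
for some miner than some (other) stable configuration. -/
theorem exists_better_equilibrium {ι C : Type*} [Fintype ι] [DecidableEq ι]
    [Fintype C] [DecidableEq C]
    (m : ι → ℝ) (F : C → ℝ) (hm : ∀ p, 0 < m p) (hF : ∀ c, 0 < F c)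
    (hGeneric : ∀ c c' : C, c ≠ c' → ∀ A B : Finset ι, A.Nonempty → B.Nonempty →
      F c / ∑ p ∈ A, m p ≠ F c' / ∑ p ∈ B, m p)
    (hAlone : ∀ (s : ι → C) (c : C),
      (Finset.univ.filter fun p => s p = c).card ≤ 1 → ∃ p, betterStep m F s p c)
    (hTwo : ∃ s₁ s₂ : ι → C, stableConfig m F s₁ ∧ stableConfig m F s₂ ∧ s₁ ≠ s₂)
    (s : ι → C) (hs : stableConfig m F s) :
    ∃ (p : ι) (s' : ι → C), stableConfig m F s' ∧ payoff m F s p < payoff m F s' p :=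
  exists_better_equilibrium_general m F hm hGeneric hAlone hTwo s hs
end

section
/- If two miners p and p' both mine coin c in configuration s with m_p ≤ m_{p'}, and p is stable in s (has no better response step), then p' is also stable in s. -/
/-!
Miners sharing coin `c` earn the same revenue `F c / M_c` per unit of power, while a move to
`c' ≠ c` pays `F c' / (M_{c'} + m)` per unit, which decreases in the mover's power `m`.
So a move that does not pay off for `p` does not pay off for the bigger `p'` either.
-/

open Finset Function

section TotalPower

variable {ι C : Type*} [Fintype ι] [DecidableEq C]

theorem totalPower_nonneg {m : ι → ℝ} (hm : ∀ q, 0 ≤ m q) (s : ι → C) (c : C) :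
    0 ≤ totalPower m s c :=
  sum_nonneg fun q _ => by split_ifs <;> simp [hm q]

theorem totalPower_update_of_ne [DecidableEq ι] (m : ι → ℝ) {s : ι → C} {q : ι} {c : C}
    (hne : s q ≠ c) : totalPower m (update s q c) c = totalPower m s c + m q := by
  unfold totalPower
  rw [← sum_erase_add _ _ (mem_univ q), ← sum_erase_add _ _ (mem_univ q), update_self, if_pos rfl, if_neg hne, add_zero]
  congr 1
  refine sum_congr rfl fun r hr => ?_
  rw [update_of_ne (ne_of_mem_erase hr)]

end TotalPower

section BetterStep

variable {ι C : Type*} [Fintype ι] [DecidableEq ι] [DecidableEq C]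

theorem not_betterStep_self (m : ι → ℝ) (F : C → ℝ) (s : ι → C) (q : ι) :
    ¬ betterStep m F s q (s q) := by
  simp [betterStep]

theorem payoff_update_of_ne (m : ι → ℝ) (F : C → ℝ) {s : ι → C} {q : ι} {c : C}
    (hne : s q ≠ c) :
    payoff m F (update s q c) q = m q * F c / (totalPower m s c + m q) := by
  rw [payoff, update_self, totalPower_update_of_ne m hne]

/-- The factor `m q` common to both payoffs cancels. -/
theorem betterStep_iff_of_ne {m : ι → ℝ} (F : C → ℝ) {s : ι → C} {q : ι} {c : C}
    (hq : 0 < m q) (hne : s q ≠ c) :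
    betterStep m F s q c ↔
      F (s q) / totalPower m s (s q) < F c / (totalPower m s c + m q) := by
  rw [betterStep, payoff_update_of_ne m F hne, payoff, mul_div_assoc, mul_div_assoc,
    mul_lt_mul_iff_right₀ hq]

end BetterStep

theorem bigger_sharing_miner_stable_general {ι C : Type*} [Fintype ι] [DecidableEq ι]
    [DecidableEq C]
    (m : ι → ℝ) (F : C → ℝ) (hm : ∀ q, 0 < m q) (hF : ∀ d, 0 < F d)
    (s : ι → C) (p p' : ι) (c : C)
    (hp : s p = c) (hp' : s p' = c) (hle : m p ≤ m p')
    (hstab : minerStable m F s p) :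
    minerStable m F s p' := by
  intro c' hstep
  obtain rfl | hne := eq_or_ne c' c
  · exact not_betterStep_self m F s p' (hp' ▸ hstep)
  have hp_stays := hstab c'
  rw [betterStep_iff_of_ne F (hm p) (hp ▸ hne.symm), hp, not_lt] at hp_stays
  rw [betterStep_iff_of_ne F (hm p') (hp' ▸ hne.symm), hp'] at hstep
  have hshare : F c' / (totalPower m s c' + m p') ≤ F c' / (totalPower m s c' + m p) :=
    div_le_div_of_nonneg_left (hF c').le
      (add_pos_of_nonneg_of_pos (totalPower_nonneg (fun q => (hm q).le) s c') (hm p))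
      (by linarith)
  linarith

/-- if miners `p` and `p'` both mine coin `c` in `s`, `m p ≤ m p'`, and
`p` is stable in `s`, then `p'` is stable in `s`. -/
theorem bigger_sharing_miner_stable {ι C : Type*} [Fintype ι] [DecidableEq ι]
    [Fintype C] [DecidableEq C]
    (m : ι → ℝ) (F : C → ℝ) (hm : ∀ q, 0 < m q) (hF : ∀ d, 0 < F d)
    (s : ι → C) (p p' : ι) (c : C)
    (hp : s p = c) (hp' : s p' = c) (hle : m p ≤ m p')
    (hstab : minerStable m F s p) :
    minerStable m F s p' :=
  bigger_sharing_miner_stable_general m F hm hF s p p' c hp hp' hle hstab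
end

section
/- Every mining game G_{Π,C,F} with finite nonempty Π and C has at least one stable configuration (pure Nash equilibrium). -/
open Finset Function

/-!
Place the miners one at a time in order of decreasing power, each on a coin that maximises the
reward per unit it would receive there. Adding a miner `p` that is weaker than every miner
already placed keeps the earlier miners stable: a miner `q` on another coin than `p` sees its own
revenue unchanged and the alternatives only worsen, while a miner `q` sharing the coin `c₀` of
`p` gets exactly the per-unit reward `p` gets, which (as `m p ≤ m q`) beats what `q` could get
elsewhere.
-/

namespace MiningGame

variable {ι C : Type*} [DecidableEq C]

noncomputable def coinLoad (m : ι → ℝ) (A : Finset ι) (s : ι → C) (c : C) : ℝ :=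
  ∑ q ∈ A, if s q = c then m q else 0

/-- The per-unit reward on coin `c` of a miner of power `x` joining the miners of `A`. -/
noncomputable def joinRPU (m : ι → ℝ) (F : C → ℝ) (A : Finset ι) (s : ι → C) (c : C)
    (x : ℝ) : ℝ :=
  F c / (coinLoad m A s c + x)

/-- Stability of `s` in the game played by the miners of `A` alone. -/
def StableOn [DecidableEq ι] (m : ι → ℝ) (F : C → ℝ) (A : Finset ι) (s : ι → C) :
    Prop :=
  ∀ p ∈ A, ∀ c, joinRPU m F (A.erase p) s c (m p) ≤ joinRPU m F (A.erase p) s (s p) (m p)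

variable {m : ι → ℝ} {F : C → ℝ}

lemma coinLoad_nonneg (hm : ∀ p, 0 ≤ m p) (A : Finset ι) (s : ι → C) (c : C) :
    0 ≤ coinLoad m A s c :=
  sum_nonneg fun p _ => by split_ifs <;> simp [hm p]

lemma coinLoad_congr {A : Finset ι} {s t : ι → C} (h : ∀ q ∈ A, s q = t q) (c : C) :
    coinLoad m A s c = coinLoad m A t c :=
  sum_congr rfl fun q hq => by rw [h q hq]

lemma coinLoad_insert [DecidableEq ι] {A : Finset ι} {p : ι} (hp : p ∉ A) (s : ι → C)
    (c : C) : coinLoad m (insert p A) s c = (if s p = c then m p else 0) + coinLoad m A s c :=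
  sum_insert hp

lemma coinLoad_eq_add_erase [DecidableEq ι] {A : Finset ι} {p : ι} (hp : p ∈ A) (s : ι → C)
    (c : C) : coinLoad m A s c = (if s p = c then m p else 0) + coinLoad m (A.erase p) s c :=
  (add_sum_erase A _ hp).symm

lemma coinLoad_update_of_notMem [DecidableEq ι] {A : Finset ι} {p : ι} (hp : p ∉ A)
    (s : ι → C) (c₀ : C) : coinLoad m A (update s p c₀) = coinLoad m A s :=
  funext <| coinLoad_congr fun _ hq => update_of_ne (ne_of_mem_of_not_mem hq hp) _ _

variable [DecidableEq ι]

lemma joinRPU_erase_insert_update {B : Finset ι} {p q : ι} (hp : p ∉ B) (hqp : q ≠ p)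
    (s : ι → C) (c₀ c : C) (x : ℝ) :
    joinRPU m F ((insert p B).erase q) (update s p c₀) c x
      = F c / ((if c₀ = c then m p else 0) + coinLoad m (B.erase q) s c + x) := by
  have hp' : p ∉ B.erase q := fun h => hp (mem_of_mem_erase h)
  rw [joinRPU, erase_insert_of_ne hqp.symm, coinLoad_insert hp', update_self,
    coinLoad_update_of_notMem hp']

lemma StableOn.joinRPU_le_of_insert (hm : ∀ p, 0 < m p) (hF : ∀ c, 0 ≤ F c) {B : Finset ι}
    {s : ι → C} (hs : StableOn m F B s) {p : ι} (hp : p ∉ B) (hmin : ∀ q ∈ B, m p ≤ m q)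
    {c₀ : C} (hc₀ : ∀ c, joinRPU m F B s c (m p) ≤ joinRPU m F B s c₀ (m p))
    {q : ι} (hq : q ∈ B) (c : C) :
    joinRPU m F ((insert p B).erase q) (update s p c₀) c (m q)
      ≤ joinRPU m F ((insert p B).erase q) (update s p c₀) (s q) (m q) := by
  have hqp : q ≠ p := ne_of_mem_of_not_mem hq hp
  have hload : ∀ c, 0 ≤ coinLoad m (B.erase q) s c := coinLoad_nonneg (fun p => (hm p).le) _ s
  rw [joinRPU_erase_insert_update hp hqp, joinRPU_erase_insert_update hp hqp]
  by_cases hshare : c₀ = s q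
  · by_cases hc : c = s q
    · rw [hc]
    have hqc : coinLoad m B s c = coinLoad m (B.erase q) s c := by
      rw [coinLoad_eq_add_erase hq, if_neg (Ne.symm hc), zero_add]
    have hqc₀ : coinLoad m B s c₀ = m q + coinLoad m (B.erase q) s (s q) := by
      rw [coinLoad_eq_add_erase hq, hshare, if_pos rfl]
    calc F c / ((if c₀ = c then m p else 0) + coinLoad m (B.erase q) s c + m q)
        = joinRPU m F B s c (m q) := by
          rw [if_neg (hshare ▸ Ne.symm hc), zero_add, joinRPU, hqc]
      _ ≤ joinRPU m F B s c (m p) :=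
          div_le_div_of_nonneg_left (hF c) (by linarith [hload c, hm p]) (by linarith [hmin q hq])
      _ ≤ joinRPU m F B s c₀ (m p) := hc₀ c
      _ = F (s q) / ((if c₀ = s q then m p else 0) + coinLoad m (B.erase q) s (s q) + m q) := by
          rw [joinRPU, hqc₀, if_pos hshare, hshare]; ring_nf
  · rw [if_neg hshare, zero_add]
    calc F c / ((if c₀ = c then m p else 0) + coinLoad m (B.erase q) s c + m q)
        ≤ F c / (coinLoad m (B.erase q) s c + m q) := by
          refine div_le_div_of_nonneg_left (hF c) (by linarith [hload c, hm q]) ?_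
          split_ifs <;> linarith [hm p]
      _ ≤ F (s q) / (coinLoad m (B.erase q) s (s q) + m q) := hs q hq c

lemma StableOn.insert_update (hm : ∀ p, 0 < m p) (hF : ∀ c, 0 ≤ F c) {B : Finset ι}
    {s : ι → C} (hs : StableOn m F B s) {p : ι} (hp : p ∉ B) (hmin : ∀ q ∈ B, m p ≤ m q)
    {c₀ : C} (hc₀ : ∀ c, joinRPU m F B s c (m p) ≤ joinRPU m F B s c₀ (m p)) :
    StableOn m F (insert p B) (update s p c₀) := by
  intro q hq c
  rcases mem_insert.1 hq with rfl | hqB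
  · rw [erase_insert hp, update_self, joinRPU, joinRPU, coinLoad_update_of_notMem hp]
    exact hc₀ c
  · rw [update_of_ne (ne_of_mem_of_not_mem hqB hp)]
    exact hs.joinRPU_le_of_insert hm hF hp hmin hc₀ hqB c

lemma exists_stableOn [Finite C] [Nonempty C] (hm : ∀ p, 0 < m p) (hF : ∀ c, 0 ≤ F c)
    (A : Finset ι) : ∃ s : ι → C, StableOn m F A s := by
  induction A using induction_on_min_value m with
  | empty => exact ⟨fun _ => Classical.arbitrary C, by simp [StableOn]⟩
  | insert p B hp hmin ih =>
    obtain ⟨s, hs⟩ := ih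
    obtain ⟨c₀, hc₀⟩ := Finite.exists_max fun c => joinRPU m F B s c (m p)
    exact ⟨update s p c₀, hs.insert_update hm hF hp hmin hc₀⟩

lemma payoff_update [Fintype ι] (s : ι → C) (p : ι) (c : C) :
    payoff m F (update s p c) p = m p * joinRPU m F (univ.erase p) s c (m p) := by
  have htotal : totalPower m (update s p c) c = coinLoad m (univ.erase p) s c + m p := by
    rw [totalPower, ← coinLoad, coinLoad_eq_add_erase (mem_univ p), update_self, if_pos rfl,
      coinLoad_update_of_notMem (notMem_erase p univ), add_comm]
  rw [payoff, update_self, htotal, joinRPU, mul_div_assoc]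

lemma stableConfig_of_stableOn_univ [Fintype ι] (hm : ∀ p, 0 < m p) {s : ι → C}
    (hs : StableOn m F univ s) : stableConfig m F s := by
  intro p c
  rw [betterStep, not_lt]
  conv_rhs => rw [← update_eq_self p s]
  rw [payoff_update, payoff_update]
  exact mul_le_mul_of_nonneg_left (hs p (mem_univ p) c) (hm p).le

end MiningGame

theorem exists_stable_configuration_general {ι C : Type*} [Fintype ι] [DecidableEq ι]
    [Fintype C] [DecidableEq C] [Nonempty C]
    (m : ι → ℝ) (F : C → ℝ) (hm : ∀ p, 0 < m p) (hF : ∀ c, 0 < F c) :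
    ∃ s : ι → C, stableConfig m F s := by
  obtain ⟨s, hs⟩ := MiningGame.exists_stableOn hm (fun c => (hF c).le) (univ : Finset ι)
  exact ⟨s, MiningGame.stableConfig_of_stableOn_univ hm hs⟩

/-- every mining game (finite nonempty sets of miners and coins, positive
powers and rewards) has a stable configuration (pure Nash equilibrium). -/
theorem exists_stable_configuration {ι C : Type*} [Fintype ι] [DecidableEq ι] [Nonempty ι]
    [Fintype C] [DecidableEq C] [Nonempty C]
    (m : ι → ℝ) (F : C → ℝ) (hm : ∀ p, 0 < m p) (hF : ∀ c, 0 < F c) :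
    ∃ s : ι → C, stableConfig m F s :=
  exists_stable_configuration_general m F hm hF
end
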